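/- arXiv:1904.12479 — 2 statements merged into one kernel-verified Lean document; each statement's English description precedes it below -/
import Mathlib

section
/- Let v : ℕ → ℝ² be given by v m = (m-1, -m), and for each m let K m = {a • v m + b • v (m+1) | a, b ∈ ℝ, a ≥ 0, b ≥ 0} ⊆ ℝ². Then for every t ≥ 0, the point (t, -t) lies in the topological closure of ⋃_{m ∈ ℕ} K m. -/
/-!
The ray of `K m` through `v m` has direction `(m - 1, -m)`, which tends to the direction `(1, -1)`.
Concretely, rescaling `v (n + 1)` by `t / (n + 1)` lands on the line `y = -t` at `x = t n / (n + 1)`,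
and these points of the cones converge to `(t, -t)`.
-/

noncomputable def v (m : ℕ) : ℝ × ℝ := ((m : ℝ) - 1, -(m : ℝ))

noncomputable def K (m : ℕ) : Set (ℝ × ℝ) :=
  {x | ∃ a b : ℝ, 0 ≤ a ∧ 0 ≤ b ∧ x = a • v m + b • v (m + 1)}

open Filter Topology

lemma smul_v_mem_K (m : ℕ) {a : ℝ} (ha : 0 ≤ a) : a • v m ∈ K m :=
  ⟨a, 0, ha, le_rfl, by simp⟩

lemma div_succ_smul_v_succ (t : ℝ) (n : ℕ) :
    (t / (n + 1)) • v (n + 1) = (t * (n / (n + 1)), -t) := by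
  have hn : (n : ℝ) + 1 ≠ 0 := n.cast_add_one_ne_zero
  simp only [v, Prod.smul_mk, smul_eq_mul, Nat.cast_add, Nat.cast_one, Prod.mk.injEq]
  exact ⟨by field_simp; ring, by field_simp⟩

lemma tendsto_div_succ_smul_v_succ (t : ℝ) :
    Tendsto (fun n : ℕ => (t / (n + 1)) • v (n + 1)) atTop (𝓝 (t, -t)) := by
  simp only [div_succ_smul_v_succ]
  refine Tendsto.prodMk_nhds ?_ tendsto_const_nhds
  simpa using (tendsto_natCast_div_add_atTop (1 : ℝ)).const_mul t

theorem stmt_1 (t : ℝ) (ht : 0 ≤ t) :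
    ((t, -t) : ℝ × ℝ) ∈ closure (⋃ m : ℕ, K m) :=
  mem_closure_of_tendsto (tendsto_div_succ_smul_v_succ t) <| .of_forall fun n =>
    Set.mem_iUnion.2 ⟨n + 1, smul_v_mem_K _ (by positivity)⟩
end

section
/- Define a : ℕ → ℝ² by a₀ = (1,0), a₁ = (0,-1), and a_m = (1-m, m-2) for m ≥ 2, and define u : ℕ → ℝ² by u_m = (1-m, m) (so u₀ = (1,0), u₁ = (0,1), u₂ = (-1,2), …). Let the cones be A m = {s • a_m + t • a_{m+1} | s, t ≥ 0} and U m = {s • u_m + t • u_{m+1} | s, t ≥ 0}. Then the topological closure of (⋃_{m ∈ ℕ} A m) ∪ (⋃_{m ∈ ℕ} U m) equals ℝ². -/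
/-- g-vectors of the lower row of clusters of the Kronecker quiver. -/
noncomputable def a : ℕ → ℝ × ℝ
  | 0 => (1, 0)
  | 1 => (0, -1)
  | (m + 2) => (1 - ((m : ℝ) + 2), ((m : ℝ) + 2) - 2)

/-- g-vectors of the upper row of clusters of the Kronecker quiver. -/
noncomputable def u (m : ℕ) : ℝ × ℝ := (1 - (m : ℝ), (m : ℝ))

noncomputable def A (m : ℕ) : Set (ℝ × ℝ) :=
  {x | ∃ s t : ℝ, 0 ≤ s ∧ 0 ≤ t ∧ x = s • a m + t • a (m + 1)}

noncomputable def U (m : ℕ) : Set (ℝ × ℝ) :=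
  {x | ∃ s t : ℝ, 0 ≤ s ∧ 0 ≤ t ∧ x = s • u m + t • u (m + 1)}

/-!
Both rows of g-vectors are arithmetic progressions with step `(-1, 1)` on an affine line:
`u m` runs along `x + y = 1` and `a (m + 1)` along `x + y = -1`. Consecutive points of such a
progression bound segments covering a half-line, so the cones over them cover the corresponding
part of the half-plane `x + y > 0`, resp. `x + y < 0`; the fourth quadrant is `A 0`. So the
cones cover the complement of the line `x + y = 0`, which is dense.
-/

def cone2 {E : Type*} [AddCommGroup E] [Module ℝ E] (v w : E) : Set E :=
  {x | ∃ s t : ℝ, 0 ≤ s ∧ 0 ≤ t ∧ x = s • v + t • w}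

lemma smul_mem_cone2_of_progression {E : Type*} [AddCommGroup E] [Module ℝ E]
    (p e : E) {c r : ℝ} (hc : 0 ≤ c) (hr : 0 ≤ r) :
    ∃ m : ℕ, r • (p + c • e) ∈ cone2 (p + (m : ℝ) • e) (p + ((m : ℝ) + 1) • e) := by
  refine ⟨⌊c⌋₊, r * (1 - (c - ⌊c⌋₊)), r * (c - ⌊c⌋₊), ?_, ?_, by module⟩
  · exact mul_nonneg hr (by linarith [Nat.lt_floor_add_one c])
  · exact mul_nonneg hr (by linarith [Nat.floor_le hc])

lemma u_eq_add_smul (m : ℕ) : u m = u 0 + (m : ℝ) • ((-1, 1) : ℝ × ℝ) := by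
  ext <;> simp [u, sub_eq_add_neg]

lemma a_succ_eq_add_smul (m : ℕ) : a (m + 1) = a 1 + (m : ℝ) • ((-1, 1) : ℝ × ℝ) := by
  rcases m with _ | m
  · simp
  · ext <;> simp [a]; ring

lemma mem_A_zero {w : ℝ × ℝ} (h₁ : 0 ≤ w.1) (h₂ : w.2 ≤ 0) : w ∈ A 0 :=
  ⟨w.1, -w.2, h₁, neg_nonneg.mpr h₂, by ext <;> simp [a]⟩

lemma mem_iUnion_U {w : ℝ × ℝ} (hd : 0 < w.1 + w.2) (h₂ : 0 ≤ w.2) : w ∈ ⋃ m, U m := by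
  obtain ⟨m, hm⟩ := smul_mem_cone2_of_progression (u 0) ((-1, 1) : ℝ × ℝ)
    (div_nonneg h₂ hd.le) hd.le
  refine Set.mem_iUnion.mpr ⟨m, ?_⟩
  have hw : w = (w.1 + w.2) • (u 0 + (w.2 / (w.1 + w.2)) • ((-1, 1) : ℝ × ℝ)) := by
    have := hd.ne'
    ext <;> simp [u] <;> field_simp; ring
  rw [hw, U, u_eq_add_smul m, u_eq_add_smul (m + 1), Nat.cast_succ]
  exact hm

lemma mem_iUnion_A {w : ℝ × ℝ} (hd : w.1 + w.2 < 0) (h₁ : w.1 ≤ 0) : w ∈ ⋃ m, A m := by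
  obtain ⟨m, hm⟩ := smul_mem_cone2_of_progression (a 1) ((-1, 1) : ℝ × ℝ)
    (div_nonneg_of_nonpos h₁ hd.le) (neg_nonneg.mpr hd.le)
  refine Set.mem_iUnion.mpr ⟨m + 1, ?_⟩
  have hw : w = (-(w.1 + w.2)) • (a 1 + (w.1 / (w.1 + w.2)) • ((-1, 1) : ℝ × ℝ)) := by
    have := hd.ne
    ext <;> simp [a] <;> field_simp <;> ring
  rw [hw, A, a_succ_eq_add_smul m, a_succ_eq_add_smul (m + 1), Nat.cast_succ]
  exact hm

lemma mem_cones_of_add_ne_zero {w : ℝ × ℝ} (hw : w.1 + w.2 ≠ 0) :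
    w ∈ (⋃ m, A m) ∪ (⋃ m, U m) := by
  by_cases h₄ : 0 ≤ w.1 ∧ w.2 ≤ 0
  · exact Or.inl (Set.mem_iUnion.mpr ⟨0, mem_A_zero h₄.1 h₄.2⟩)
  push Not at h₄
  rcases hw.lt_or_gt with hd | hd
  · exact Or.inl (mem_iUnion_A hd (not_lt.mp fun h => by linarith [h₄ h.le]))
  · refine Or.inr (mem_iUnion_U hd ?_)
    rcases le_or_gt 0 w.1 with h | h
    · exact (h₄ h).le
    · linarith

lemma dense_add_ne_zero : Dense {w : ℝ × ℝ | w.1 + w.2 ≠ 0} := by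
  let σ : ℝ × ℝ →L[ℝ] ℝ := ContinuousLinearMap.fst ℝ ℝ ℝ + ContinuousLinearMap.snd ℝ ℝ ℝ
  have hσ : σ ≠ 0 := fun h => by simpa [σ] using congrArg (· ((1, 0) : ℝ × ℝ)) h
  exact (dense_compl_singleton (0 : ℝ)).preimage (σ.isOpenMap_of_ne_zero hσ)

theorem stmt_15 :
    closure ((⋃ m : ℕ, A m) ∪ (⋃ m : ℕ, U m)) = (Set.univ : Set (ℝ × ℝ)) :=
  (dense_add_ne_zero.mono fun _ => mem_cones_of_add_ne_zero).closure_eq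
end
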